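/- Let Ξ_{≤α} = {x ∈ K : limsup_{r→0} log μ(B(x,r))/log r ≤ α}. If the open set condition holds and α ≤ α(0) (the value -β'(0)), then the packing dimension of Ξ_{≤α} is at most β*(α) = inf_q (αq + β(q)). -/

import Mathlib

open Metric MeasureTheory Topology Filter
open scoped NNReal ENNReal

/-- The `δ`-pre-packing content `P^s_δ`-style supremum: the supremum of `∑ diam(B_i)^s`
over countable disjoint families of closed balls of diameter at most `δ` centred in `A`,
followed by letting `δ → 0`.  This is the pre-packing measure `P^s(A)`. -/
noncomputable def prePackingMeasure {X : Type*} [MetricSpace X] (s : ℝ) (A : Set X) : ℝ≥0∞ :=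
  ⨅ (δ : ℝ) (_ : 0 < δ),
    ⨆ (c : ℕ → X) (ρ : ℕ → ℝ) (_ : ∀ n, c n ∈ A) (_ : ∀ n, 0 < ρ n ∧ 2 * ρ n ≤ δ)
      (_ : Pairwise fun m n => Disjoint (closedBall (c m) (ρ m)) (closedBall (c n) (ρ n))),
      ∑' n, ENNReal.ofReal (2 * ρ n) ^ s

/-- The packing measure `𝒫^s(A) = inf { ∑ᵢ P^s(Aᵢ) : A ⊆ ⋃ᵢ Aᵢ }`. -/
noncomputable def packingMeasure {X : Type*} [MetricSpace X] (s : ℝ) (A : Set X) : ℝ≥0∞ :=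
  ⨅ (f : ℕ → Set X) (_ : A ⊆ ⋃ n, f n), ∑' n, prePackingMeasure s (f n)

/-- The packing dimension `dim_P A = inf { s ≥ 0 : 𝒫^s(A) = 0 }`. -/
noncomputable def dimP {X : Type*} [MetricSpace X] (A : Set X) : ℝ :=
  sInf {s : ℝ | 0 ≤ s ∧ packingMeasure s A = 0}

/-!
Fix `q ≥ 0` and `t > β q`, so that `∑ p_i ^ q r_i ^ t < 1`. Cutting the coding tree at scale `ρ`
and using the open set condition, each ball `B(x, ρ)` centred on `K` meets boundedly many
cylinders `S_w K` with `r_w ≍ ρ`, and each such cylinder meets boundedly many balls of any packing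
at scale `≍ r_w`. Hence `∑ μ(B_k) ^ q (2ρ_k) ^ t` is bounded uniformly over packings of `K`, since
`∑_w p_w ^ q r_w ^ t` is a geometric series. Near a point of local dimension `≤ α` we have
`μ(B(x, ρ)) ≥ ρ ^ (α + ε)`, so `(2ρ) ^ (α q + t + ε) ≲ δ ^ ε μ(B) ^ q (2ρ) ^ t` on `δ`-packings and
the packing measure of exponent `α q + β q + O(ε)` vanishes: `dim_P ≤ α q + β q` for `q ≥ 0`.
For `q < 0`, the tangent to the convex function `β` at `0` and `α ≤ -β'(0)` give
`α q + β q ≥ β 0`. If `α` lies below every `log p_i / log r_i`, then `α q + β q → -∞` and the same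
estimate gives `dim_P = 0`, matching the junk value `sInf = 0`.
-/

theorem Real.rpow_le_iff_log_div_log_le {ρ y a : ℝ} (hρ0 : 0 < ρ) (hρ1 : ρ < 1) (hy : 0 < y) :
    ρ ^ a ≤ y ↔ Real.log y / Real.log ρ ≤ a := by
  rw [div_le_iff_of_neg (Real.log_neg hρ0 hρ1), ← Real.log_le_log_iff (by positivity) hy,
    Real.log_rpow hρ0, mul_comm]

theorem Real.rpow_le_max_of_mem_Icc {x a b t : ℝ} (ha : 0 < a) (hx : x ∈ Set.Icc a b) :
    x ^ t ≤ max (a ^ t) (b ^ t) := by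
  rcases le_total 0 t with ht | ht
  · exact le_max_of_le_right (Real.rpow_le_rpow (by linarith [hx.1]) hx.2 ht)
  · exact le_max_of_le_left (Real.rpow_le_rpow_of_nonpos ha hx.1 ht)

/-- `hT` bounds `log f ρ / log ρ` above near `0⁺`; without it the `limsup` could be the junk value
of an unbounded function. -/
theorem eventually_rpow_le_of_limsup_le {f : ℝ → ℝ} {T α ε : ℝ} (hε : 0 < ε)
    (hT : ∀ᶠ ρ in 𝓝[>] 0, ρ ^ T ≤ f ρ)
    (h : limsup (fun ρ => Real.log (f ρ) / Real.log ρ) (𝓝[>] 0) ≤ α) :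
    ∀ᶠ ρ in 𝓝[>] 0, ρ ^ (α + ε) ≤ f ρ := by
  have hsmall : ∀ᶠ ρ in 𝓝[>] (0 : ℝ), ρ ∈ Set.Ioo 0 1 := Ioo_mem_nhdsGT one_pos
  have hbdd : IsBoundedUnder (· ≤ ·) (𝓝[>] 0) fun ρ => Real.log (f ρ) / Real.log ρ := by
    refine ⟨T, eventually_map.2 ?_⟩
    filter_upwards [hT, hsmall] with ρ hρT hρ
    exact (Real.rpow_le_iff_log_div_log_le hρ.1 hρ.2
      ((Real.rpow_pos_of_pos hρ.1 T).trans_le hρT)).1 hρT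
  filter_upwards [hT, hsmall,
    eventually_lt_of_limsup_lt (h.trans_lt (lt_add_of_pos_right α hε)) hbdd] with ρ hρT hρ hlt
  exact (Real.rpow_le_iff_log_div_log_le hρ.1 hρ.2
    ((Real.rpow_pos_of_pos hρ.1 T).trans_le hρT)).2 hlt.le

theorem rpow_add_add_le_of_rpow_le {ρ δ m a q t ε : ℝ} (hρ : 0 < ρ) (hδ : 2 * ρ ≤ δ) (hq : 0 ≤ q)
    (hε : 0 ≤ ε) (hm : ρ ^ a ≤ m) :
    (2 * ρ) ^ (a * q + t + ε) ≤ 2 ^ (a * q) * δ ^ ε * (m ^ q * (2 * ρ) ^ t) := by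
  have h2ρ : 0 < 2 * ρ := by positivity
  have hm0 : 0 ≤ m := (Real.rpow_pos_of_pos hρ a).le.trans hm
  calc (2 * ρ) ^ (a * q + t + ε) = 2 ^ (a * q) * (ρ ^ a) ^ q * (2 * ρ) ^ t * (2 * ρ) ^ ε := by
        rw [Real.rpow_add h2ρ, Real.rpow_add h2ρ, Real.mul_rpow zero_le_two hρ.le,
          Real.rpow_mul hρ.le]
    _ ≤ 2 ^ (a * q) * m ^ q * (2 * ρ) ^ t * δ ^ ε := by gcongr
    _ = 2 ^ (a * q) * δ ^ ε * (m ^ q * (2 * ρ) ^ t) := by ring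

/-- The alternative `hg` matters because `sInf` of a set of reals unbounded below is `0`. -/
theorem le_sInf_range_of_forall_le_max {D : ℝ} {g : ℝ → ℝ} (hD : ∀ q, 0 ≤ q → D ≤ max (g q) 0)
    (hneg : ∀ q < 0, g 0 ≤ g q) (hg : (∀ q, 0 ≤ q → 0 ≤ g q) ∨ ∀ b, ∃ q, 0 ≤ q ∧ g q < b) :
    D ≤ sInf (Set.range g) := by
  rcases hg with hg | hg
  · refine le_csInf (Set.range_nonempty g) (Set.forall_mem_range.2 fun q => ?_)
    rcases le_or_gt 0 q with hq | hq
    · exact (hD q hq).trans_eq (max_eq_left (hg q hq))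
    · exact ((hD 0 le_rfl).trans_eq (max_eq_left (hg 0 le_rfl))).trans (hneg q hq)
  · have hunbdd : ¬BddBelow (Set.range g) := fun ⟨b, hb⟩ => by
      obtain ⟨q, -, hq⟩ := hg b
      exact (hb ⟨q, rfl⟩).not_gt hq
    rw [Real.sInf_of_not_bddBelow hunbdd]
    refine le_of_forall_gt_imp_ge_of_dense fun s hs => ?_
    obtain ⟨q, hq0, hq⟩ := hg s
    exact (hD q hq0).trans (max_le hq.le hs.le)

theorem ConvexOn.add_mul_sub_le_of_hasDerivAt {f : ℝ → ℝ} {f' x y : ℝ}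
    (hf : ConvexOn ℝ Set.univ f) (hf' : HasDerivAt f f' x) (hyx : y < x) :
    f x + f' * (y - x) ≤ f y := by
  have := hf.slope_le_of_hasDerivAt (Set.mem_univ y) (Set.mem_univ x) hyx hf'
  rw [slope_def_field, div_le_iff₀ (sub_pos.2 hyx)] at this
  linarith

theorem List.prod_map_rpow {ι : Type*} {r : ι → ℝ} (hr : ∀ i, 0 ≤ r i) (t : ℝ) (w : List ι) :
    (w.map fun i => r i ^ t).prod = (w.map r).prod ^ t := by
  rw [← Real.list_prod_map_rpow _ (by simpa using fun i _ => hr i), List.map_map]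
  rfl

theorem List.prod_map_nonneg {ι : Type*} {f : ι → ℝ} (hf : ∀ i, 0 ≤ f i) (w : List ι) :
    0 ≤ (w.map f).prod :=
  List.prod_nonneg (by simpa using fun i _ => hf i)

theorem List.prod_map_pos {ι : Type*} {f : ι → ℝ} (hf : ∀ i, 0 < f i) (w : List ι) :
    0 < (w.map f).prod :=
  List.prod_pos (by simpa using fun i _ => hf i)

theorem List.prod_map_rpow_mul_rpow {ι : Type*} {p r : ι → ℝ} (hp : ∀ i, 0 ≤ p i)
    (hr : ∀ i, 0 ≤ r i) (q t : ℝ) (w : List ι) :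
    (w.map fun i => p i ^ q * r i ^ t).prod = (w.map p).prod ^ q * (w.map r).prod ^ t := by
  rw [List.prod_map_mul, List.prod_map_rpow hp, List.prod_map_rpow hr]

theorem List.prod_map_le_prod_map {ι : Type*} {f g : ι → ℝ} (hf : ∀ i, 0 ≤ f i)
    (hfg : ∀ i, f i ≤ g i) (w : List ι) : (w.map f).prod ≤ (w.map g).prod := by
  induction w with
  | nil => simp
  | cons i w ih =>
    simp only [List.map_cons, List.prod_cons]
    exact mul_le_mul (hfg i) ih (List.prod_map_nonneg hf w) ((hf i).trans (hfg i))

theorem Finset.sum_sum_le_mul_sum_biUnion {κ α : Type*} [DecidableEq α] (F : Finset κ)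
    (Λ : κ → Finset α) {f : α → ℝ} (hf : ∀ a, 0 ≤ f a) {L : ℝ}
    (hL : ∀ a, (({k ∈ F | a ∈ Λ k} : Finset κ).card : ℝ) ≤ L) :
    ∑ k ∈ F, ∑ a ∈ Λ k, f a ≤ L * ∑ a ∈ F.biUnion Λ, f a := by
  rw [Finset.sum_comm' (t' := F.biUnion Λ) (s' := fun a => {k ∈ F | a ∈ Λ k}) (fun k a => by
    simp only [Finset.mem_biUnion, Finset.mem_filter]
    exact ⟨fun h => ⟨h, k, h⟩, fun h => h.1⟩), Finset.mul_sum]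
  refine Finset.sum_le_sum fun a _ => ?_
  rw [Finset.sum_const, nsmul_eq_mul]
  exact mul_le_mul_of_nonneg_right (hL a) (hf a)

theorem List.sum_prod_map_le {ι : Type*} [Fintype ι] {a : ι → ℝ} (ha : ∀ i, 0 ≤ a i)
    (h1 : ∑ i, a i < 1) (T : Finset (List ι)) :
    ∑ w ∈ T, (w.map a).prod ≤ (1 - ∑ i, a i)⁻¹ := by
  classical
  have hθ : 0 ≤ ∑ i, a i := Finset.sum_nonneg fun i _ => ha i
  have hlevel : ∀ k, ∑ w ∈ T with w.length = k, (w.map a).prod ≤ (∑ i, a i) ^ k := by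
    intro k
    calc ∑ w ∈ T with w.length = k, (w.map a).prod
        ≤ ∑ w ∈ Finset.univ.image (List.ofFn : (Fin k → ι) → List ι), (w.map a).prod := by
          refine Finset.sum_le_sum_of_subset_of_nonneg (fun w hw => ?_) fun w _ _ =>
            List.prod_map_nonneg ha w
          obtain ⟨-, rfl⟩ := Finset.mem_filter.1 hw
          exact Finset.mem_image.2 ⟨w.get, Finset.mem_univ _, List.ofFn_get w⟩
      _ = (∑ i, a i) ^ k := by
          rw [Finset.sum_image fun f _ g _ h => List.ofFn_injective h, Finset.sum_pow',
            Fintype.piFinset_univ]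
          simp [List.map_ofFn, List.prod_ofFn]
  calc ∑ w ∈ T, (w.map a).prod
      = ∑ k ∈ T.image List.length, ∑ w ∈ T with w.length = k, (w.map a).prod :=
        (Finset.sum_fiberwise_of_maps_to (fun w hw => Finset.mem_image_of_mem _ hw) _).symm
    _ ≤ ∑ k ∈ T.image List.length, (∑ i, a i) ^ k := Finset.sum_le_sum fun k _ => hlevel k
    _ ≤ ∑' k, (∑ i, a i) ^ k :=
        (summable_geometric_of_lt_one hθ h1).sum_le_tsum _ fun k _ => pow_nonneg hθ k
    _ = (1 - ∑ i, a i)⁻¹ := tsum_geometric_of_lt_one hθ h1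

theorem Finset.rpow_sum_le_card_rpow_mul_sum_rpow {κ : Type*} {s : Finset κ} (hs : s.Nonempty)
    {f : κ → ℝ} (hf : ∀ a, 0 ≤ f a) {q : ℝ} (hq : 0 ≤ q) :
    (∑ a ∈ s, f a) ^ q ≤ (s.card : ℝ) ^ q * ∑ a ∈ s, f a ^ q := by
  obtain ⟨b, hb, hmax⟩ := s.exists_max_image f hs
  calc (∑ a ∈ s, f a) ^ q ≤ ((s.card : ℝ) * f b) ^ q := by
        gcongr
        · exact Finset.sum_nonneg fun a _ => hf a
        · simpa using Finset.sum_le_card_nsmul s f (f b) hmax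
    _ = (s.card : ℝ) ^ q * f b ^ q := Real.mul_rpow (Nat.cast_nonneg _) (hf b)
    _ ≤ (s.card : ℝ) ^ q * ∑ a ∈ s, f a ^ q := by
        gcongr
        exact Finset.single_le_sum (f := fun a => f a ^ q)
          (fun a _ => Real.rpow_nonneg (hf a) q) hb

theorem rpow_mul_rpow_le_sum {κ : Type*} {s : Finset κ} (hs : s.Nonempty) {P R : κ → ℝ}
    (hP : ∀ w, 0 ≤ P w) {m M ρ c q t : ℝ} (hρ : 0 < ρ) (hc : 0 < c) (hq : 0 ≤ q) (hm : 0 ≤ m)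
    (hmP : m ≤ ∑ w ∈ s, P w) (hcard : (s.card : ℝ) ≤ M)
    (hR : ∀ w ∈ s, ρ * c ≤ R w ∧ R w ≤ ρ) :
    m ^ q * (2 * ρ) ^ t ≤ M ^ q * max ((2 / c) ^ t) (2 ^ t) * ∑ w ∈ s, P w ^ q * R w ^ t := by
  have hRpos : ∀ w ∈ s, 0 < R w := fun w hw => (mul_pos hρ hc).trans_le (hR w hw).1
  have hsize : ∀ w ∈ s, (2 * ρ) ^ t ≤ max ((2 / c) ^ t) (2 ^ t) * R w ^ t := fun w hw => by
    have hx : 2 * ρ / R w ∈ Set.Icc 2 (2 / c) := by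
      constructor
      · rw [le_div_iff₀ (hRpos w hw)]; linarith [(hR w hw).2]
      · rw [div_le_div_iff₀ (hRpos w hw) hc]; linarith [(hR w hw).1]
    calc (2 * ρ) ^ t = (2 * ρ / R w) ^ t * R w ^ t := by
          rw [← Real.mul_rpow (by linarith [hx.1]) (hRpos w hw).le,
            div_mul_cancel₀ _ (hRpos w hw).ne']
      _ ≤ max (2 ^ t) ((2 / c) ^ t) * R w ^ t :=
          mul_le_mul_of_nonneg_right (Real.rpow_le_max_of_mem_Icc two_pos hx)
            (Real.rpow_nonneg (hRpos w hw).le t)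
      _ = max ((2 / c) ^ t) (2 ^ t) * R w ^ t := by rw [max_comm]
  have hM : 0 ≤ M := (Nat.cast_nonneg _).trans hcard
  have hmass : m ^ q ≤ M ^ q * ∑ w ∈ s, P w ^ q :=
    calc m ^ q ≤ (∑ w ∈ s, P w) ^ q := Real.rpow_le_rpow hm hmP hq
      _ ≤ (s.card : ℝ) ^ q * ∑ w ∈ s, P w ^ q :=
          Finset.rpow_sum_le_card_rpow_mul_sum_rpow hs hP hq
      _ ≤ M ^ q * ∑ w ∈ s, P w ^ q := by
          gcongr
          exact Finset.sum_nonneg fun w _ => Real.rpow_nonneg (hP w) q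
  calc m ^ q * (2 * ρ) ^ t ≤ M ^ q * ∑ w ∈ s, P w ^ q * (2 * ρ) ^ t := by
        rw [← Finset.sum_mul, ← mul_assoc]
        exact mul_le_mul_of_nonneg_right hmass (by positivity)
    _ ≤ M ^ q * ∑ w ∈ s, P w ^ q * (max ((2 / c) ^ t) (2 ^ t) * R w ^ t) := by
        gcongr with w hw
        · exact Real.rpow_nonneg (hP w) q
        · exact hsize w hw
    _ = M ^ q * max ((2 / c) ^ t) (2 ^ t) * ∑ w ∈ s, P w ^ q * R w ^ t := by
        rw [mul_assoc, Finset.mul_sum (s := s) (a := max _ _)]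
        exact congrArg _ (Finset.sum_congr rfl fun w _ => by ring)

section Metric

variable {X : Type*}

theorem continuous_of_dist_eq_mul [PseudoMetricSpace X] {f : X → X} {c : ℝ} (hc : 0 ≤ c)
    (hf : ∀ x y, dist (f x) (f y) = c * dist x y) : Continuous f :=
  (LipschitzWith.of_dist_le_mul fun x y => by rw [hf, Real.coe_toNNReal c hc]).continuous

theorem injective_of_dist_eq_mul [MetricSpace X] {f : X → X} {c : ℝ} (hc : 0 < c)
    (hf : ∀ x y, dist (f x) (f y) = c * dist x y) : Function.Injective f := fun x y h =>
  dist_eq_zero.1 <| (mul_eq_zero.1 (by rw [← hf, h, dist_self])).resolve_left hc.ne'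

theorem IsCompact.infDist_le_mul_infDist [PseudoMetricSpace X] {K : Set X} {f : X → X}
    {c : ℝ} (hK : IsCompact K) (hKne : K.Nonempty)
    (hfK : f '' K ⊆ K) (hf : ∀ x y, dist (f x) (f y) ≤ c * dist x y) (x : X) :
    infDist (f x) K ≤ c * infDist x K := by
  obtain ⟨y, hy, hxy⟩ := hK.exists_infDist_eq_dist hKne x
  rw [hxy]
  exact (infDist_le_dist_of_mem (hfK ⟨y, hy, rfl⟩)).trans (hf x y)

end Metric

section FiniteDimensional

variable {E : Type*} [NormedAddCommGroup E] [NormedSpace ℝ E] [FiniteDimensional ℝ E]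

theorem surjective_of_dist_eq_mul [StrictConvexSpace ℝ E] {f : E → E} {c : ℝ} (hc : 0 < c)
    (hf : ∀ x y, dist (f x) (f y) = c * dist x y) : Function.Surjective f := by
  have hg : Isometry fun x => c⁻¹ • f x := Isometry.of_dist_eq fun x y => by
    rw [dist_smul₀, hf, Real.norm_eq_abs, abs_inv, abs_of_pos hc, inv_mul_cancel_left₀ hc.ne']
  have : Inhabited E := ⟨0⟩
  intro y
  obtain ⟨x, hx⟩ := (hg.affineIsometryOfStrictConvexSpace.toAffineIsometryEquiv rfl).surjective
    (c⁻¹ • y)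
  exact ⟨x, smul_right_injective E (inv_ne_zero hc.ne') hx⟩

theorem closedBall_subset_image_of_dist_eq_mul [StrictConvexSpace ℝ E] {f : E → E} {c : ℝ}
    (hc : 0 < c) (hf : ∀ x y, dist (f x) (f y) = c * dist x y) (x : E) (t : ℝ) :
    closedBall (f x) (c * t) ⊆ f '' closedBall x t := by
  intro z hz
  obtain ⟨y, rfl⟩ := surjective_of_dist_eq_mul hc hf z
  rw [mem_closedBall, hf] at hz
  exact ⟨y, mem_closedBall.2 (le_of_mul_le_mul_left hz hc), rfl⟩

theorem card_le_of_pairwiseDisjoint_closedBall {κ : Type*} {F : Finset κ} {x : κ → E}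
    {ρ : κ → ℝ} {z : E} {a b : ℝ} (ha : 0 < a) (hb : 0 ≤ b) (hρ : ∀ i ∈ F, a ≤ ρ i)
    (hsub : ∀ i ∈ F, closedBall (x i) (ρ i) ⊆ closedBall z b)
    (hdisj : (F : Set κ).PairwiseDisjoint fun i => closedBall (x i) (ρ i)) :
    (F.card : ℝ) ≤ (b / a) ^ Module.finrank ℝ E := by
  let : MeasurableSpace E := borel E
  have : BorelSpace E := ⟨rfl⟩
  set ν : Measure E := Measure.addHaar
  set v := ν (ball 0 1)
  have hv0 : v ≠ 0 := (measure_ball_pos ν 0 one_pos).ne'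
  have hvtop : v ≠ ⊤ := measure_ball_lt_top.ne
  have hvol : (F.card : ℝ≥0∞) * ENNReal.ofReal (a ^ Module.finrank ℝ E) * v
      ≤ ENNReal.ofReal (b ^ Module.finrank ℝ E) * v := by
    calc (F.card : ℝ≥0∞) * ENNReal.ofReal (a ^ Module.finrank ℝ E) * v
        = ∑ _i ∈ F, ν (closedBall 0 a) := by
          rw [Measure.addHaar_closedBall ν 0 ha.le, Finset.sum_const, nsmul_eq_mul, mul_assoc]
      _ ≤ ∑ i ∈ F, ν (closedBall (x i) (ρ i)) := Finset.sum_le_sum fun i hi => by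
          rw [Measure.addHaar_closedBall ν 0 ha.le,
            Measure.addHaar_closedBall ν _ (ha.le.trans (hρ i hi))]
          gcongr
          exact hρ i hi
      _ = ν (⋃ i ∈ F, closedBall (x i) (ρ i)) :=
          (measure_biUnion_finset hdisj fun i _ => measurableSet_closedBall).symm
      _ ≤ ν (closedBall z b) := measure_mono (Set.iUnion₂_subset hsub)
      _ = ENNReal.ofReal (b ^ Module.finrank ℝ E) * v := Measure.addHaar_closedBall ν z hb
  rw [ENNReal.mul_le_mul_iff_left hv0 hvtop, ← ENNReal.ofReal_natCast, ← ENNReal.ofReal_mul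
    (Nat.cast_nonneg _), ENNReal.ofReal_le_ofReal_iff (by positivity)] at hvol
  rw [div_pow, le_div_iff₀ (by positivity)]
  exact hvol

end FiniteDimensional

section Packing

variable {X : Type*} [MetricSpace X]

theorem dimP_le_of_forall_packingMeasure_eq_zero {A : Set X} {t : ℝ}
    (h : ∀ s, t < s → packingMeasure s A = 0) : dimP A ≤ max t 0 := by
  refine le_of_forall_gt_imp_ge_of_dense fun s hs => csInf_le ⟨0, fun _ h => h.1⟩ ?_
  exact ⟨(le_max_right t 0).trans hs.le, h s ((le_max_left t 0).trans_lt hs)⟩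

theorem packingMeasure_eq_zero_of_subset_iUnion {A : Set X} {s : ℝ} {f : ℕ → Set X}
    (hA : A ⊆ ⋃ n, f n) (hf : ∀ n, prePackingMeasure s (f n) = 0) : packingMeasure s A = 0 :=
  le_antisymm ((iInf₂_le f hA).trans (ENNReal.tsum_eq_zero.2 hf).le) bot_le

theorem prePackingMeasure_eq_zero_of_sum_le {A : Set X} {s ε δ₀ C : ℝ} (hε : 0 < ε) (hδ₀ : 0 < δ₀)
    (h : ∀ δ ∈ Set.Ioc 0 δ₀, ∀ (c : ℕ → X) (ρ : ℕ → ℝ), (∀ n, c n ∈ A) →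
      (∀ n, 0 < ρ n ∧ 2 * ρ n ≤ δ) →
      (Pairwise fun m n => Disjoint (closedBall (c m) (ρ m)) (closedBall (c n) (ρ n))) →
      ∀ k, ∑ n ∈ Finset.range k, (2 * ρ n) ^ s ≤ C * δ ^ ε) :
    prePackingMeasure s A = 0 := by
  have hle : ∀ δ ∈ Set.Ioc 0 δ₀, prePackingMeasure s A ≤ ENNReal.ofReal (C * δ ^ ε) := by
    refine fun δ hδ => (iInf₂_le δ hδ.1).trans <| iSup_le fun c => iSup_le fun ρ =>
      iSup_le fun hc => iSup_le fun hρ => iSup_le fun hdisj => ENNReal.tsum_le_of_sum_range_le ?_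
    intro k
    calc ∑ n ∈ Finset.range k, ENNReal.ofReal (2 * ρ n) ^ s
        = ENNReal.ofReal (∑ n ∈ Finset.range k, (2 * ρ n) ^ s) := by
          rw [ENNReal.ofReal_sum_of_nonneg fun n _ =>
            Real.rpow_nonneg (by linarith [(hρ n).1]) s]
          exact Finset.sum_congr rfl fun n _ => ENNReal.ofReal_rpow_of_pos (by linarith [(hρ n).1])
      _ ≤ ENNReal.ofReal (C * δ ^ ε) := ENNReal.ofReal_le_ofReal (h δ hδ c ρ hc hρ hdisj k)
  have hlim : Tendsto (fun δ => ENNReal.ofReal (C * δ ^ ε)) (𝓝[>] 0) (𝓝 0) := by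
    have : Tendsto (fun δ : ℝ => C * δ ^ ε) (𝓝 0) (𝓝 (C * 0 ^ ε)) :=
      ((Real.continuous_rpow_const hε.le).tendsto 0).const_mul C
    rw [Real.zero_rpow hε.ne', mul_zero] at this
    simpa using (ENNReal.tendsto_ofReal this).mono_left nhdsWithin_le_nhds
  exact le_antisymm (ge_of_tendsto hlim (eventually_of_mem (Ioc_mem_nhdsGT hδ₀) hle)) bot_le

end Packing

section Beta

variable {ι : Type*} [Fintype ι] {p r : ι → ℝ} {β : ℝ → ℝ}

theorem rpow_mul_rpow_eq_rpow_logb {p r : ℝ} (hp : 0 < p) (hr0 : 0 < r) (hr1 : r < 1) (q t : ℝ) :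
    p ^ q * r ^ t = r ^ (Real.logb r p * q + t) := by
  rw [Real.rpow_add hr0, Real.rpow_mul hr0.le, Real.rpow_logb hr0 hr1.ne hp]

theorem sum_rpow_strictAnti [Nonempty ι] (hp : ∀ i, 0 < p i) (hr0 : ∀ i, 0 < r i)
    (hr1 : ∀ i, r i < 1) (q : ℝ) : StrictAnti fun t : ℝ => ∑ i, p i ^ q * r i ^ t := by
  intro t₁ t₂ h
  exact Finset.sum_lt_sum_of_nonempty Finset.univ_nonempty fun i _ =>
    mul_lt_mul_of_pos_left (Real.rpow_lt_rpow_of_exponent_gt (hr0 i) (hr1 i) h)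
      (Real.rpow_pos_of_pos (hp i) q)

theorem le_of_sum_rpow_le_one [Nonempty ι] (hp : ∀ i, 0 < p i) (hr0 : ∀ i, 0 < r i)
    (hr1 : ∀ i, r i < 1) (hβ : ∀ q, ∑ i, p i ^ q * r i ^ β q = 1) {q t : ℝ}
    (h : ∑ i, p i ^ q * r i ^ t ≤ 1) : β q ≤ t :=
  (sum_rpow_strictAnti hp hr0 hr1 q).le_iff_ge.1 (h.trans (hβ q).ge)

theorem convexOn_of_sum_rpow_eq_one [Nonempty ι] (hp : ∀ i, 0 < p i) (hr0 : ∀ i, 0 < r i)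
    (hr1 : ∀ i, r i < 1) (hβ : ∀ q, ∑ i, p i ^ q * r i ^ β q = 1) : ConvexOn ℝ Set.univ β := by
  refine ⟨convex_univ, fun q₁ _ q₂ _ a b ha hb hab => le_of_sum_rpow_le_one hp hr0 hr1 hβ ?_⟩
  simp only [smul_eq_mul, rpow_mul_rpow_eq_rpow_logb (hp _) (hr0 _) (hr1 _)] at hβ ⊢
  calc ∑ i, r i ^ (Real.logb (r i) (p i) * (a * q₁ + b * q₂) + (a * β q₁ + b * β q₂))
      = ∑ i, r i ^ (a * (Real.logb (r i) (p i) * q₁ + β q₁)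
          + b * (Real.logb (r i) (p i) * q₂ + β q₂)) :=
        Finset.sum_congr rfl fun i _ => by ring_nf
    _ ≤ ∑ i, (a * r i ^ (Real.logb (r i) (p i) * q₁ + β q₁)
          + b * r i ^ (Real.logb (r i) (p i) * q₂ + β q₂)) :=
        Finset.sum_le_sum fun i _ =>
          (convexOn_rpow_left (hr0 i)).2 (Set.mem_univ _) (Set.mem_univ _) ha hb hab
    _ = 1 := by rw [Finset.sum_add_distrib, ← Finset.mul_sum, ← Finset.mul_sum, hβ, hβ, mul_one,
          mul_one, hab]

theorem logb_mul_add_nonneg (hp : ∀ i, 0 < p i) (hr0 : ∀ i, 0 < r i) (hr1 : ∀ i, r i < 1)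
    (hβ : ∀ q, ∑ i, p i ^ q * r i ^ β q = 1) (i : ι) (q : ℝ) :
    0 ≤ Real.logb (r i) (p i) * q + β q := by
  have := Finset.single_le_sum (f := fun i => p i ^ q * r i ^ β q)
    (fun j _ => by have := hp j; have := hr0 j; positivity) (Finset.mem_univ i)
  rw [hβ, rpow_mul_rpow_eq_rpow_logb (hp i) (hr0 i) (hr1 i)] at this
  exact ((Real.rpow_le_one_iff_of_pos (hr0 i)).1 this |>.resolve_left fun h =>
    (hr1 i).not_ge h.1).2

theorem exists_logb_mul_add_le [Nonempty ι] (hp : ∀ i, 0 < p i) (hr0 : ∀ i, 0 < r i)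
    (hr1 : ∀ i, r i < 1) (hβ : ∀ q, ∑ i, p i ^ q * r i ^ β q = 1) (q : ℝ) :
    ∃ i, Real.logb (r i) (p i) * q + β q ≤ Real.logb (r i) (Fintype.card ι)⁻¹ := by
  have hcard : (0 : ℝ) < Fintype.card ι := Nat.cast_pos.2 Fintype.card_pos
  obtain ⟨i, -, hi⟩ := Finset.exists_le_of_sum_le (f := fun _ => ((Fintype.card ι : ℝ))⁻¹)
    Finset.univ_nonempty (by rw [hβ q]; simp [hcard.ne'])
  rw [rpow_mul_rpow_eq_rpow_logb (hp i) (hr0 i) (hr1 i)] at hi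
  exact ⟨i, (Real.le_logb_iff_rpow_le_of_base_lt_one (hr0 i) (hr1 i) (inv_pos.2 hcard)).2 hi⟩

theorem exists_nonneg_mul_add_lt [Nonempty ι] (hp : ∀ i, 0 < p i) (hr0 : ∀ i, 0 < r i)
    (hr1 : ∀ i, r i < 1) (hβ : ∀ q, ∑ i, p i ^ q * r i ^ β q = 1) {α : ℝ}
    (hα : ∀ i, α < Real.logb (r i) (p i)) (b : ℝ) : ∃ q, 0 ≤ q ∧ α * q + β q < b := by
  have hev : ∀ᶠ q in atTop, ∀ i,
      (α - Real.logb (r i) (p i)) * q + Real.logb (r i) (Fintype.card ι)⁻¹ < b :=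
    eventually_all.2 fun i => (tendsto_atBot_add_const_right _ _
      (tendsto_id.const_mul_atTop_of_neg (sub_neg.2 (hα i)))).eventually_lt_atBot b
  obtain ⟨q, hq, hq0⟩ := (hev.and (eventually_ge_atTop 0)).exists
  obtain ⟨i, hi⟩ := exists_logb_mul_add_le hp hr0 hr1 hβ q
  exact ⟨q, hq0, by linarith [hq i]⟩

end Beta

namespace IFS

variable {ι X : Type*}

def wordMap (S : ι → X → X) : List ι → X → X
  | [] => id
  | i :: w => S i ∘ wordMap S w

@[simp] theorem wordMap_nil (S : ι → X → X) : wordMap S [] = id := rfl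

@[simp] theorem wordMap_cons (S : ι → X → X) (i : ι) (w : List ι) :
    wordMap S (i :: w) = S i ∘ wordMap S w := rfl

variable {S : ι → X → X}

theorem measurable_wordMap [MeasurableSpace X] (hS : ∀ i, Measurable (S i)) (w : List ι) :
    Measurable (wordMap S w) := by
  induction w with
  | nil => exact measurable_id
  | cons i w ih => exact (hS i).comp ih

theorem continuous_wordMap [TopologicalSpace X] (hS : ∀ i, Continuous (S i)) (w : List ι) :
    Continuous (wordMap S w) := by
  induction w with
  | nil => exact continuous_id
  | cons i w ih => exact (hS i).comp ih

theorem image_wordMap_subset {A : Set X} (hA : ∀ i, S i '' A ⊆ A) (w : List ι) :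
    wordMap S w '' A ⊆ A := by
  induction w with
  | nil => simp
  | cons i w ih =>
    rw [wordMap_cons, Set.image_comp]
    exact (Set.image_mono ih).trans (hA i)

theorem dist_wordMap [PseudoMetricSpace X] {r : ι → ℝ}
    (hS : ∀ i x y, dist (S i x) (S i y) = r i * dist x y) (w : List ι) (x y : X) :
    dist (wordMap S w x) (wordMap S w y) = (w.map r).prod * dist x y := by
  induction w with
  | nil => simp
  | cons i w ih => simp [hS, ih, mul_assoc]

theorem dist_wordMap_le_of_nonempty_inter [PseudoMetricSpace X] {r : ι → ℝ}
    (hS : ∀ i x y, dist (S i x) (S i y) = r i * dist x y)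
    {K : Set X} {u₀ : X} {D : ℝ} (hKD : K ⊆ closedBall u₀ D) {w : List ι} {c : X} {ρ : ℝ}
    (h : (wordMap S w '' K ∩ ball c ρ).Nonempty) (hw : 0 ≤ (w.map r).prod) :
    dist (wordMap S w u₀) c ≤ (w.map r).prod * D + ρ := by
  obtain ⟨_, ⟨z, hz, rfl⟩, hzc⟩ := h
  calc dist (wordMap S w u₀) c ≤ dist (wordMap S w u₀) (wordMap S w z) + dist (wordMap S w z) c :=
        dist_triangle _ _ _
    _ ≤ (w.map r).prod * D + ρ := by
        rw [dist_wordMap hS]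
        gcongr
        · exact mem_closedBall'.1 (hKD hz)
        · exact (mem_ball.1 hzc).le

section CutSet

variable [Fintype ι] [DecidableEq ι]

/-- The cut set of `r` at scale `ρ`: the words `w` with `r_w ≤ ρ` all of whose proper prefixes
`u` have `r_u > ρ`, found by peeling letters off the front (`r_{iw} = r_i r_w`). The fuel `n` caps
the word length, so the description is exact once `(max r) ^ n ≤ ρ`. -/
noncomputable def cutSet (r : ι → ℝ) : ℕ → ℝ → Finset (List ι)
  | 0, _ => {[]}
  | n + 1, ρ => if 1 ≤ ρ then {[]} else
      Finset.univ.biUnion fun i => (cutSet r n (ρ / r i)).image (List.cons i)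

variable {r : ι → ℝ}

theorem mem_cutSet_succ {n : ℕ} {ρ : ℝ} {w : List ι} :
    w ∈ cutSet r (n + 1) ρ ↔
      (1 ≤ ρ ∧ w = []) ∨ (ρ < 1 ∧ ∃ i v, v ∈ cutSet r n (ρ / r i) ∧ w = i :: v) := by
  rw [cutSet]
  split_ifs with h
  · simp [h]
  · simp [h, not_le.1 h, eq_comm]

theorem prod_le_of_mem_cutSet {c : ℝ} (hr : ∀ i, 0 < r i) (hc : ∀ i, r i ≤ c) :
    ∀ {n : ℕ} {ρ : ℝ}, c ^ n ≤ ρ → ∀ w ∈ cutSet r n ρ, (w.map r).prod ≤ ρ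
  | 0, ρ, hρ, w, hw => by simp_all [cutSet]
  | n + 1, ρ, hρ, w, hw => by
    rcases mem_cutSet_succ.1 hw with ⟨h1, rfl⟩ | ⟨-, i, v, hv, rfl⟩
    · simpa using h1
    have hcn : c ^ n ≤ ρ / r i := by
      rw [le_div_iff₀ (hr i)]
      calc c ^ n * r i ≤ c ^ n * c :=
            mul_le_mul_of_nonneg_left (hc i) (pow_nonneg ((hr i).le.trans (hc i)) n)
        _ = c ^ (n + 1) := (pow_succ c n).symm
        _ ≤ ρ := hρ
    calc ((i :: v).map r).prod = r i * (v.map r).prod := List.prod_cons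
      _ ≤ r i * (ρ / r i) :=
          mul_le_mul_of_nonneg_left (prod_le_of_mem_cutSet hr hc hcn v hv) (hr i).le
      _ = ρ := mul_div_cancel₀ ρ (hr i).ne'

theorem le_prod_of_mem_cutSet {c : ℝ} (hc0 : 0 < c) (hc : ∀ i, c ≤ r i) :
    ∀ {n : ℕ} {ρ : ℝ}, ρ * c ≤ 1 → ∀ w ∈ cutSet r n ρ, ρ * c ≤ (w.map r).prod
  | 0, ρ, hρ, w, hw => by simp_all [cutSet]
  | n + 1, ρ, hρ, w, hw => by
    rcases mem_cutSet_succ.1 hw with ⟨-, rfl⟩ | ⟨h1, i, v, hv, rfl⟩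
    · simpa using hρ
    have hri : 0 < r i := hc0.trans_le (hc i)
    have hρc : ρ / r i * c ≤ 1 := by
      rw [div_mul_eq_mul_div, div_le_one hri]
      nlinarith [hc i]
    calc ρ * c = r i * (ρ / r i * c) := by field_simp
      _ ≤ r i * (v.map r).prod :=
          mul_le_mul_of_nonneg_left (le_prod_of_mem_cutSet hc0 hc hρc v hv) hri.le
      _ = ((i :: v).map r).prod := List.prod_cons.symm

theorem exists_mem_cutSet_mem_image {K : Set X} (hK : K ⊆ ⋃ i, S i '' K) :
    ∀ (n : ℕ) (ρ : ℝ), ∀ x ∈ K, ∃ w ∈ cutSet r n ρ, x ∈ wordMap S w '' K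
  | 0, ρ, x, hx => ⟨[], by simp [cutSet], x, hx, rfl⟩
  | n + 1, ρ, x, hx => by
    by_cases h1 : 1 ≤ ρ
    · exact ⟨[], mem_cutSet_succ.2 (Or.inl ⟨h1, rfl⟩), x, hx, rfl⟩
    obtain ⟨i, y, hy, rfl⟩ := Set.mem_iUnion.1 (hK hx)
    obtain ⟨v, hv, z, hz, rfl⟩ := exists_mem_cutSet_mem_image hK n (ρ / r i) y hy
    exact ⟨i :: v, mem_cutSet_succ.2 (Or.inr ⟨not_le.1 h1, i, v, hv, rfl⟩), z, hz, rfl⟩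

theorem pairwiseDisjoint_cutSet {U : Set X} (hinj : ∀ i, Function.Injective (S i))
    (hU : ∀ i, S i '' U ⊆ U) (hdisj : Pairwise fun i j => Disjoint (S i '' U) (S j '' U)) :
    ∀ (n : ℕ) (ρ : ℝ), (cutSet r n ρ : Set (List ι)).PairwiseDisjoint (wordMap S · '' U)
  | 0, ρ => by simp [cutSet]
  | n + 1, ρ => by
    intro w hw v hv hwv
    rcases mem_cutSet_succ.1 hw with ⟨hρ, rfl⟩ | ⟨hρ, i, w', hw', rfl⟩
    · rcases mem_cutSet_succ.1 hv with ⟨-, rfl⟩ | ⟨hρ', -⟩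
      · exact absurd rfl hwv
      · linarith
    rcases mem_cutSet_succ.1 hv with ⟨hρ', -⟩ | ⟨-, j, v', hv', rfl⟩
    · linarith
    simp only [Function.onFun, wordMap_cons, Set.image_comp]
    by_cases hij : i = j
    · subst hij
      exact (Set.disjoint_image_iff (hinj i)).2 <|
        pairwiseDisjoint_cutSet hinj hU hdisj n _ hw' hv' fun h => hwv (h ▸ rfl)
    · exact (hdisj hij).mono (Set.image_mono (image_wordMap_subset hU w'))
        (Set.image_mono (image_wordMap_subset hU v'))

section Measure

variable [MeasurableSpace X] {μ : Measure X} {p : ι → ℝ}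

theorem eq_sum_cutSet (hp : ∀ i, 0 ≤ p i) (hS : ∀ i, Measurable (S i))
    (hμ : μ = ∑ i, ENNReal.ofReal (p i) • μ.map (S i)) :
    ∀ (n : ℕ) (ρ : ℝ), μ = ∑ w ∈ cutSet r n ρ, ENNReal.ofReal (w.map p).prod • μ.map (wordMap S w)
  | 0, ρ => by simp [cutSet]
  | n + 1, ρ => by
    by_cases h1 : 1 ≤ ρ
    · simp [cutSet, h1]
    have hdisj : ((Finset.univ : Finset ι) : Set ι).PairwiseDisjoint
        fun i => (cutSet r n (ρ / r i)).image (List.cons i) := by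
      intro i _ j _ hij
      simp only [Function.onFun, Finset.disjoint_left, Finset.mem_image]
      rintro _ ⟨v, -, rfl⟩ ⟨v', -, h⟩
      exact hij (List.cons_eq_cons.1 h).1.symm
    calc μ = ∑ i, ENNReal.ofReal (p i) • μ.map (S i) := hμ
      _ = ∑ i, ENNReal.ofReal (p i) • (∑ v ∈ cutSet r n (ρ / r i),
            ENNReal.ofReal (v.map p).prod • μ.map (wordMap S v)).map (S i) :=
          Finset.sum_congr rfl fun i _ => by rw [← eq_sum_cutSet hp hS hμ n (ρ / r i)]
      _ = ∑ i, ∑ v ∈ cutSet r n (ρ / r i),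
            ENNReal.ofReal ((i :: v).map p).prod • μ.map (wordMap S (i :: v)) := by
          refine Finset.sum_congr rfl fun i _ => ?_
          rw [Measure.map_finset_sum (hS i).aemeasurable, Finset.smul_sum]
          refine Finset.sum_congr rfl fun v _ => ?_
          rw [Measure.map_smul, Measure.map_map (hS i) (measurable_wordMap hS v), smul_smul,
            List.map_cons, List.prod_cons, ENNReal.ofReal_mul (hp i), wordMap_cons]
      _ = _ := by
          rw [cutSet, if_neg h1, Finset.sum_biUnion hdisj]
          refine Finset.sum_congr rfl fun i _ => ?_
          rw [Finset.sum_image fun v _ v' _ h => List.cons_injective h]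

theorem apply_eq_sum_cutSet (hp : ∀ i, 0 ≤ p i) (hS : ∀ i, Measurable (S i))
    (hμ : μ = ∑ i, ENNReal.ofReal (p i) • μ.map (S i)) (n : ℕ) (ρ : ℝ) {A : Set X}
    (hA : MeasurableSet A) :
    μ A = ∑ w ∈ cutSet r n ρ, ENNReal.ofReal (w.map p).prod * μ (wordMap S w ⁻¹' A) := by
  conv_lhs => rw [eq_sum_cutSet (r := r) hp hS hμ n ρ]
  simp [Measure.map_apply (measurable_wordMap hS _) hA]

end Measure

end CutSet

section Invariant

variable [Fintype ι] [MeasurableSpace X] {μ : Measure X} [IsProbabilityMeasure μ] {p r : ι → ℝ}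

theorem measure_le_of_preimage_subset (hS : ∀ i, Measurable (S i))
    (hμ : μ = ∑ i, ENNReal.ofReal (p i) • μ.map (S i)) {A B : Set X} (hA : MeasurableSet A)
    (hAB : ∀ i, S i ⁻¹' A ⊆ B) : μ A ≤ μ B := by
  have hsum : ∑ i, ENNReal.ofReal (p i) = 1 := by
    have := congrArg (fun ν : Measure X => ν Set.univ) hμ
    simpa [Measure.map_apply (hS _) MeasurableSet.univ] using this.symm
  calc μ A = ∑ i, ENNReal.ofReal (p i) * μ (S i ⁻¹' A) := by
        conv_lhs => rw [hμ]
        simp [Measure.map_apply (hS _) hA]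
    _ ≤ ∑ i, ENNReal.ofReal (p i) * μ B := by gcongr with i; exact hAB i
    _ = μ B := by rw [← Finset.sum_mul, hsum, one_mul]

variable [MetricSpace X] [OpensMeasurableSpace X] {K : Set X}

theorem measure_eq_one_of_contracting {c : ℝ} (hc0 : 0 ≤ c) (hc1 : c < 1) (hrc : ∀ i, r i ≤ c)
    (hS : ∀ i x y, dist (S i x) (S i y) ≤ r i * dist x y) (hSm : ∀ i, Measurable (S i))
    (hμ : μ = ∑ i, ENNReal.ofReal (p i) • μ.map (S i)) (hK : IsCompact K) (hKne : K.Nonempty)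
    (hSK : ∀ i, S i '' K ⊆ K) : μ K = 1 := by
  have hmeas : ∀ t a, MeasurableSet {x | t ≤ a * infDist x K} := fun t a =>
    measurableSet_le measurable_const ((continuous_infDist_pt K).const_smul a).measurable
  have hpow : ∀ t n, μ {x | t ≤ infDist x K} ≤ μ {x | t ≤ c ^ n * infDist x K} := by
    intro t n
    induction n with
    | zero => simp
    | succ n ih =>
      refine ih.trans (measure_le_of_preimage_subset hSm hμ (hmeas _ _) fun i x hx => ?_)
      calc t ≤ c ^ n * infDist (S i x) K := hx
        _ ≤ c ^ n * (c * infDist x K) := by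
          gcongr
          exact hK.infDist_le_mul_infDist hKne (hSK i)
            (fun x y => (hS i x y).trans (by gcongr; exact hrc i)) x
        _ = c ^ (n + 1) * infDist x K := by ring
  have hnull : ∀ t > 0, μ {x | t ≤ infDist x K} = 0 := by
    intro t ht
    have hanti : Antitone fun n : ℕ => {x | t ≤ c ^ n * infDist x K} :=
      fun m n hmn x (hx : t ≤ _) => show t ≤ _ from hx.trans
        (mul_le_mul_of_nonneg_right (pow_le_pow_of_le_one hc0 hc1.le hmn) infDist_nonneg)
    have hempty : ⋂ n : ℕ, {x | t ≤ c ^ n * infDist x K} = ∅ := by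
      refine Set.eq_empty_of_forall_notMem fun x hx => ?_
      obtain ⟨n, hn⟩ := (((tendsto_pow_atTop_nhds_zero_of_lt_one hc0 hc1).mul_const
        (infDist x K)).eventually (gt_mem_nhds (by rwa [zero_mul]))).exists
      exact (Set.mem_iInter.1 hx n).not_gt hn
    have := tendsto_measure_iInter_atTop (fun n => (hmeas t (c ^ n)).nullMeasurableSet) hanti
      ⟨0, measure_ne_top μ _⟩
    rw [hempty, measure_empty] at this
    exact le_antisymm (ge_of_tendsto' this (hpow t)) bot_le
  rw [← prob_compl_eq_zero_iff hK.measurableSet]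
  refine measure_mono_null (fun x hx => ?_) (measure_iUnion_null fun n : ℕ =>
    hnull (1 / (n + 1)) Nat.one_div_pos_of_nat)
  obtain ⟨n, hn⟩ := exists_nat_one_div_lt ((hK.isClosed.notMem_iff_infDist_pos hKne).1 hx)
  exact Set.mem_iUnion.2 ⟨n, hn.le⟩

end Invariant

section LowerBound

variable [Fintype ι] [DecidableEq ι] [MetricSpace X] {p r : ι → ℝ} {K : Set X}

theorem exists_mem_cutSet_image_subset_ball {rmin rmax : ℝ} (hrmin : 0 < rmin)
    (hrmin_le : ∀ i, rmin ≤ r i) (hrmax : rmax < 1) (hle_rmax : ∀ i, r i ≤ rmax)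
    (hS : ∀ i x y, dist (S i x) (S i y) = r i * dist x y) (hK : IsCompact K)
    (hKcov : K ⊆ ⋃ i, S i '' K) {x : X} (hx : x ∈ K) {ρ : ℝ}
    (hρ : ρ ∈ Set.Ioo 0 (rmin / (diam K + 1))) :
    ∃ n, ∃ w ∈ cutSet r n (ρ / (diam K + 1)),
      ρ / (diam K + 1) * rmin ≤ (w.map r).prod ∧ wordMap S w '' K ⊆ ball x ρ := by
  have hr0 : ∀ i, 0 < r i := fun i => hrmin.trans_le (hrmin_le i)
  obtain ⟨i, -⟩ := Set.mem_iUnion.1 (hKcov hx)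
  have hD : 0 < diam K + 1 := by linarith [diam_nonneg (s := K)]
  have hρD : 0 < ρ / (diam K + 1) := div_pos hρ.1 hD
  have hρD1 : ρ / (diam K + 1) * rmin ≤ 1 := by
    rw [div_mul_eq_mul_div, div_le_one hD]
    nlinarith [(lt_div_iff₀ hD).1 hρ.2, hrmin_le i, hle_rmax i, diam_nonneg (s := K)]
  obtain ⟨n, hn⟩ := exists_pow_lt_of_lt_one hρD hrmax
  obtain ⟨w, hw, y, hy, rfl⟩ := exists_mem_cutSet_mem_image hKcov n _ x hx
  refine ⟨n, w, hw, le_prod_of_mem_cutSet hrmin hrmin_le hρD1 w hw, ?_⟩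
  rintro _ ⟨z, hz, rfl⟩
  rw [mem_ball, dist_wordMap hS]
  calc (w.map r).prod * dist z y ≤ ρ / (diam K + 1) * diam K :=
        mul_le_mul (prod_le_of_mem_cutSet hr0 hle_rmax hn.le w hw)
          (dist_le_diam_of_mem hK.isBounded hz hy) dist_nonneg hρD.le
    _ < ρ / (diam K + 1) * (diam K + 1) := by gcongr; linarith
    _ = ρ := div_mul_cancel₀ ρ hD.ne'

variable [MeasurableSpace X] [BorelSpace X] {μ : Measure X}

theorem ofReal_prod_le_measure_image (hp : ∀ i, 0 ≤ p i) (hSc : ∀ i, Continuous (S i))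
    (hμ : μ = ∑ i, ENNReal.ofReal (p i) • μ.map (S i)) (hμK : μ K = 1) (hK : IsCompact K)
    {n : ℕ} {ρ : ℝ} {w : List ι} (hw : w ∈ cutSet r n ρ) :
    ENNReal.ofReal (w.map p).prod ≤ μ (wordMap S w '' K) := by
  have hmeas := (hK.image (continuous_wordMap hSc w)).isClosed.measurableSet
  calc ENNReal.ofReal (w.map p).prod = ENNReal.ofReal (w.map p).prod * μ K := by rw [hμK, mul_one]
    _ ≤ ENNReal.ofReal (w.map p).prod * μ (wordMap S w ⁻¹' (wordMap S w '' K)) := by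
        gcongr
        exact Set.subset_preimage_image _ _
    _ ≤ ∑ v ∈ cutSet r n ρ,
          ENNReal.ofReal (v.map p).prod * μ (wordMap S v ⁻¹' (wordMap S w '' K)) :=
        Finset.single_le_sum (f := fun v => ENNReal.ofReal (v.map p).prod *
          μ (wordMap S v ⁻¹' (wordMap S w '' K))) (fun _ _ => bot_le) hw
    _ = μ (wordMap S w '' K) :=
        (apply_eq_sum_cutSet hp (fun i => (hSc i).measurable) hμ n ρ hmeas).symm

/-- A ball `B(x, ρ)` centred on `K` contains a cylinder `S_w K` with `r_w ≍ ρ`, whose mass `p_w`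
is at least `r_w ^ T` once `r_i ^ T ≤ p_i` for all `i`. -/
theorem exists_rpow_le_measure_ball [IsFiniteMeasure μ] {rmin rmax : ℝ} (hrmin : 0 < rmin)
    (hrmin_le : ∀ i, rmin ≤ r i) (hrmax : rmax < 1) (hle_rmax : ∀ i, r i ≤ rmax)
    (hp : ∀ i, 0 < p i) (hS : ∀ i x y, dist (S i x) (S i y) = r i * dist x y)
    (hμ : μ = ∑ i, ENNReal.ofReal (p i) • μ.map (S i)) (hμK : μ K = 1) (hK : IsCompact K)
    (hKcov : K ⊆ ⋃ i, S i '' K) :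
    ∃ T : ℝ, ∀ x ∈ K, ∀ᶠ ρ in 𝓝[>] 0, ρ ^ T ≤ (μ (ball x ρ)).toReal := by
  have hr0 : ∀ i, 0 < r i := fun i => hrmin.trans_le (hrmin_le i)
  have hr1 : ∀ i, r i < 1 := fun i => (hle_rmax i).trans_lt hrmax
  obtain ⟨T, hT⟩ := (Set.finite_range fun i => Real.logb (r i) (p i)).bddAbove
  have hrT : ∀ i, r i ^ max T 0 ≤ p i := fun i =>
    (Real.logb_le_iff_le_rpow_of_base_lt_one (hr0 i) (hr1 i) (hp i)).1
      ((hT ⟨i, rfl⟩).trans (le_max_left _ _))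
  refine ⟨2 * max T 0, fun x hx => ?_⟩
  have hD : 0 < diam K + 1 := by linarith [diam_nonneg (s := K)]
  filter_upwards [Ioo_mem_nhdsGT (div_pos hrmin hD)] with ρ hρ
  obtain ⟨n, w, hw, hwge, hsub⟩ :=
    exists_mem_cutSet_image_subset_ball hrmin hrmin_le hrmax hle_rmax hS hK hKcov hx hρ
  have hmass : ρ ^ (2 * max T 0) ≤ (w.map p).prod :=
    calc ρ ^ (2 * max T 0) = (ρ * ρ) ^ max T 0 := by
          rw [two_mul, Real.rpow_add hρ.1, Real.mul_rpow hρ.1.le hρ.1.le]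
      _ ≤ (ρ / (diam K + 1) * rmin) ^ max T 0 := by
          refine Real.rpow_le_rpow (mul_self_nonneg ρ) ?_ (le_max_right _ _)
          rw [div_mul_eq_mul_div, le_div_iff₀ hD]
          nlinarith [mul_lt_mul_of_pos_left ((lt_div_iff₀ hD).1 hρ.2) hρ.1]
      _ ≤ (w.map r).prod ^ max T 0 :=
          Real.rpow_le_rpow (mul_pos (div_pos hρ.1 hD) hrmin).le hwge (le_max_right _ _)
      _ = (w.map fun i => r i ^ max T 0).prod := (List.prod_map_rpow (fun i => (hr0 i).le) _ w).symm
      _ ≤ (w.map p).prod := List.prod_map_le_prod_map (fun i => Real.rpow_nonneg (hr0 i).le _) hrT w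
  rw [← ENNReal.ofReal_le_iff_le_toReal (measure_ne_top _ _)]
  exact (ENNReal.ofReal_le_ofReal hmass).trans <| (ofReal_prod_le_measure_image (fun i => (hp i).le)
    (fun i => continuous_of_dist_eq_mul (hr0 i).le (hS i)) hμ hμK hK hw).trans (measure_mono hsub)

end LowerBound

section Moment

variable [Fintype ι] [DecidableEq ι] {r p : ι → ℝ}

section Meeting

variable [MetricSpace X] {K : Set X}

open Classical in
noncomputable def cutSetMeeting (S : ι → X → X) (r : ι → ℝ) (K : Set X) (n : ℕ) (c : X)
    (ρ : ℝ) : Finset (List ι) :=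
  {w ∈ cutSet r n ρ | (wordMap S w '' K ∩ ball c ρ).Nonempty}

theorem mem_cutSetMeeting {n : ℕ} {c : X} {ρ : ℝ} {w : List ι} :
    w ∈ cutSetMeeting S r K n c ρ ↔ w ∈ cutSet r n ρ ∧ (wordMap S w '' K ∩ ball c ρ).Nonempty := by
  classical
  rw [cutSetMeeting, Finset.mem_filter]

open Classical in
theorem toReal_measure_ball_le_sum_cutSetMeeting [MeasurableSpace X] [OpensMeasurableSpace X]
    {μ : Measure X} [IsProbabilityMeasure μ] (hp : ∀ i, 0 ≤ p i) (hSm : ∀ i, Measurable (S i))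
    (hμ : μ = ∑ i, ENNReal.ofReal (p i) • μ.map (S i)) (hμK : μ Kᶜ = 0) (n : ℕ) (c : X)
    (ρ : ℝ) : (μ (ball c ρ)).toReal ≤ ∑ w ∈ cutSetMeeting S r K n c ρ, (w.map p).prod := by
  refine ENNReal.toReal_le_of_le_ofReal
    (Finset.sum_nonneg fun w _ => List.prod_map_nonneg hp w) ?_
  calc μ (ball c ρ) = ∑ w ∈ cutSet r n ρ, ENNReal.ofReal (w.map p).prod *
        μ (wordMap S w ⁻¹' ball c ρ) := apply_eq_sum_cutSet hp hSm hμ n ρ measurableSet_ball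
    _ = ∑ w ∈ cutSetMeeting S r K n c ρ, ENNReal.ofReal (w.map p).prod *
        μ (wordMap S w ⁻¹' ball c ρ) := by
        refine (Finset.sum_filter_of_ne fun w _ hw => ?_).symm
        by_contra hempty
        have hsub : wordMap S w ⁻¹' ball c ρ ⊆ Kᶜ := fun x hx hxK => hempty ⟨_, ⟨x, hxK, rfl⟩, hx⟩
        exact hw (mul_eq_zero_of_right _ (measure_mono_null hsub hμK))
    _ ≤ ∑ w ∈ cutSetMeeting S r K n c ρ, ENNReal.ofReal (w.map p).prod :=
        Finset.sum_le_sum fun w _ => mul_le_of_le_one_right' prob_le_one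
    _ = ENNReal.ofReal (∑ w ∈ cutSetMeeting S r K n c ρ, (w.map p).prod) :=
        (ENNReal.ofReal_sum_of_nonneg fun w _ => List.prod_map_nonneg hp w).symm

end Meeting

section Euclidean

variable {E : Type*} [NormedAddCommGroup E] [NormedSpace ℝ E] [FiniteDimensional ℝ E]
  {S : ι → E → E} {K U : Set E} {u₀ : E} {D rmin : ℝ}

theorem card_cutSetMeeting_le [StrictConvexSpace ℝ E]
    (hS : ∀ i x y, dist (S i x) (S i y) = r i * dist x y) (hr : ∀ i, 0 < r i)
    (hU : ∀ i, S i '' U ⊆ U) (hdisj : Pairwise fun i j => Disjoint (S i '' U) (S j '' U))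
    {a : ℝ} (ha : 0 < a) (haU : closedBall u₀ a ⊆ U) (hD : 0 ≤ D) (hKD : K ⊆ closedBall u₀ D)
    (hrmin : 0 < rmin) {n : ℕ} {c : E} {ρ : ℝ} (hρ : 0 < ρ)
    (hscale : ∀ w ∈ cutSet r n ρ, ρ * rmin ≤ (w.map r).prod ∧ (w.map r).prod ≤ ρ) :
    ((cutSetMeeting S r K n c ρ).card : ℝ) ≤ ((a + D + 1) / (a * rmin)) ^ Module.finrank ℝ E := by
  have hinj : ∀ i, Function.Injective (S i) := fun i => injective_of_dist_eq_mul (hr i) (hS i)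
  rw [← mul_div_mul_right (a + D + 1) (a * rmin) hρ.ne']
  refine card_le_of_pairwiseDisjoint_closedBall (x := fun w => wordMap S w u₀)
    (ρ := fun w => a * (w.map r).prod) (z := c) (by positivity) (by positivity)
    (fun w hw => ?_) (fun w hw => ?_) ?_
  · have := (hscale w (mem_cutSetMeeting.1 hw).1).1
    nlinarith
  · obtain ⟨hwG, hmeet⟩ := mem_cutSetMeeting.1 hw
    have hcw := dist_wordMap_le_of_nonempty_inter hS hKD hmeet (List.prod_map_pos hr w).le
    have hwρ := (hscale w hwG).2
    intro y hy
    rw [mem_closedBall] at hy ⊢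
    calc dist y c ≤ dist y (wordMap S w u₀) + dist (wordMap S w u₀) c := dist_triangle _ _ _
      _ ≤ a * (w.map r).prod + ((w.map r).prod * D + ρ) := add_le_add hy hcw
      _ ≤ (a + D + 1) * ρ := by nlinarith
  · refine ((pairwiseDisjoint_cutSet hinj hU hdisj n ρ).subset
      fun w hw => (mem_cutSetMeeting.1 hw).1).mono fun w => ?_
    calc closedBall (wordMap S w u₀) (a * (w.map r).prod)
        = closedBall (wordMap S w u₀) ((w.map r).prod * a) := by rw [mul_comm]
      _ ⊆ wordMap S w '' closedBall u₀ a :=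
          closedBall_subset_image_of_dist_eq_mul (List.prod_map_pos hr w) (dist_wordMap hS w) u₀ a
      _ ⊆ wordMap S w '' U := Set.image_mono haU

theorem card_filter_mem_cutSetMeeting_le (hS : ∀ i x y, dist (S i x) (S i y) = r i * dist x y)
    (hr : ∀ i, 0 < r i) (hD : 0 ≤ D) (hKD : K ⊆ closedBall u₀ D) (hrmin : 0 < rmin)
    {n : ℕ → ℕ} {c : ℕ → E} {ρ : ℕ → ℝ}
    (hscale : ∀ k, ∀ w ∈ cutSet r (n k) (ρ k), ρ k * rmin ≤ (w.map r).prod ∧ (w.map r).prod ≤ ρ k)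
    (hdisj : Pairwise fun k l => Disjoint (closedBall (c k) (ρ k)) (closedBall (c l) (ρ l)))
    (F : Finset ℕ) (w : List ι) :
    (({k ∈ F | w ∈ cutSetMeeting S r K (n k) (c k) (ρ k)} : Finset ℕ).card : ℝ)
      ≤ (2 / rmin + D) ^ Module.finrank ℝ E := by
  have hpos : 0 < (w.map r).prod := List.prod_map_pos hr w
  rw [← mul_div_cancel_right₀ (2 / rmin + D) hpos.ne']
  refine card_le_of_pairwiseDisjoint_closedBall (x := c) (ρ := ρ) (z := wordMap S w u₀) hpos
    (by positivity) (fun k hk => ?_) (fun k hk => ?_) fun k _ l _ hkl => hdisj hkl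
  · exact (hscale k w (mem_cutSetMeeting.1 (Finset.mem_filter.1 hk).2).1).2
  · obtain ⟨hwG, hmeet⟩ := mem_cutSetMeeting.1 (Finset.mem_filter.1 hk).2
    have hcw := dist_wordMap_le_of_nonempty_inter hS hKD hmeet hpos.le
    have hρw : ρ k * rmin ≤ (w.map r).prod := (hscale k w hwG).1
    have hρ : ρ k ≤ (w.map r).prod / rmin := by rwa [le_div_iff₀ hrmin]
    intro y hy
    rw [mem_closedBall] at hy ⊢
    calc dist y (wordMap S w u₀) ≤ dist y (c k) + dist (wordMap S w u₀) (c k) :=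
          dist_triangle_right _ _ _
      _ ≤ ρ k + ((w.map r).prod * D + ρ k) := add_le_add hy hcw
      _ ≤ (2 / rmin + D) * (w.map r).prod := by
          rw [add_mul, div_mul_eq_mul_div, mul_div_assoc]
          nlinarith

theorem toReal_measure_ball_rpow_mul_le [StrictConvexSpace ℝ E] [MeasurableSpace E]
    [BorelSpace E] {μ : Measure E} [IsProbabilityMeasure μ] (hr : ∀ i, 0 < r i)
    (hp : ∀ i, 0 ≤ p i) (hS : ∀ i x y, dist (S i x) (S i y) = r i * dist x y)
    (hμ : μ = ∑ i, ENNReal.ofReal (p i) • μ.map (S i)) (hμK : μ Kᶜ = 0)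
    (hKcov : K ⊆ ⋃ i, S i '' K) (hU : ∀ i, S i '' U ⊆ U)
    (hdisj : Pairwise fun i j => Disjoint (S i '' U) (S j '' U)) {a : ℝ} (ha : 0 < a)
    (haU : closedBall u₀ a ⊆ U) (hD : 0 ≤ D) (hKD : K ⊆ closedBall u₀ D) (hrmin : 0 < rmin)
    {n : ℕ} {c : E} {ρ : ℝ} (hc : c ∈ K) (hρ : 0 < ρ)
    (hscale : ∀ w ∈ cutSet r n ρ, ρ * rmin ≤ (w.map r).prod ∧ (w.map r).prod ≤ ρ)
    {q t : ℝ} (hq : 0 ≤ q) :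
    (μ (ball c ρ)).toReal ^ q * (2 * ρ) ^ t
      ≤ (((a + D + 1) / (a * rmin)) ^ Module.finrank ℝ E) ^ q * max ((2 / rmin) ^ t) (2 ^ t) *
        ∑ w ∈ cutSetMeeting S r K n c ρ, (w.map fun i => p i ^ q * r i ^ t).prod := by
  obtain ⟨w, hw, hcw⟩ := exists_mem_cutSet_mem_image hKcov n ρ c hc
  simpa only [List.prod_map_rpow_mul_rpow hp fun i => (hr i).le] using rpow_mul_rpow_le_sum
    ⟨w, mem_cutSetMeeting.2 ⟨hw, c, hcw, mem_ball_self hρ⟩⟩ (List.prod_map_nonneg hp) hρ hrmin hq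
    ENNReal.toReal_nonneg (toReal_measure_ball_le_sum_cutSetMeeting hp
      (fun i => (continuous_of_dist_eq_mul (hr i).le (hS i)).measurable) hμ hμK n c ρ)
    (card_cutSetMeeting_le hS hr hU hdisj ha haU hD hKD hrmin hρ hscale)
    fun w hw => hscale w (mem_cutSetMeeting.1 hw).1

theorem exists_sum_rpow_measure_ball_mul_le [StrictConvexSpace ℝ E] [MeasurableSpace E]
    [BorelSpace E] {μ : Measure E} [IsProbabilityMeasure μ] {rmax : ℝ} (hrmin : 0 < rmin)
    (hrmin_le : ∀ i, rmin ≤ r i) (hrmax : rmax < 1) (hle_rmax : ∀ i, r i ≤ rmax)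
    (hp : ∀ i, 0 ≤ p i) (hS : ∀ i x y, dist (S i x) (S i y) = r i * dist x y)
    (hμ : μ = ∑ i, ENNReal.ofReal (p i) • μ.map (S i)) (hμK : μ K = 1) (hK : IsCompact K)
    (hKcov : K ⊆ ⋃ i, S i '' K) (hUo : IsOpen U) (hUne : U.Nonempty) (hU : ∀ i, S i '' U ⊆ U)
    (hdisj : Pairwise fun i j => Disjoint (S i '' U) (S j '' U)) {q t : ℝ} (hq : 0 ≤ q)
    (ht : ∑ i, p i ^ q * r i ^ t < 1) :
    ∃ C, ∀ (c : ℕ → E) (ρ : ℕ → ℝ), (∀ k, c k ∈ K) → (∀ k, ρ k ∈ Set.Ioo 0 1) →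
      (Pairwise fun k l => Disjoint (closedBall (c k) (ρ k)) (closedBall (c l) (ρ l))) →
      ∀ F : Finset ℕ, ∑ k ∈ F, (μ (ball (c k) (ρ k))).toReal ^ q * (2 * ρ k) ^ t ≤ C := by
  have hr : ∀ i, 0 < r i := fun i => hrmin.trans_le (hrmin_le i)
  have hweight : ∀ i, 0 ≤ p i ^ q * r i ^ t := fun i =>
    mul_nonneg (Real.rpow_nonneg (hp i) q) (Real.rpow_nonneg (hr i).le t)
  obtain ⟨u₀, hu₀⟩ := hUne
  obtain ⟨a, ha, haU⟩ := nhds_basis_closedBall.mem_iff.1 (hUo.mem_nhds hu₀)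
  obtain ⟨D, hD, hKD⟩ := hK.isBounded.subset_closedBall_lt 0 u₀
  set M := ((a + D + 1) / (a * rmin)) ^ Module.finrank ℝ E
  set K₂ := max ((2 / rmin) ^ t) (2 ^ t)
  refine ⟨M ^ q * K₂ * ((2 / rmin + D) ^ Module.finrank ℝ E * (1 - ∑ i, p i ^ q * r i ^ t)⁻¹),
    fun c ρ hc hρ hdisjB F => ?_⟩
  obtain ⟨i, -⟩ := Set.mem_iUnion.1 (hKcov (hc 0))
  choose n hn using fun k => exists_pow_lt_of_lt_one (hρ k).1 hrmax
  have hscale : ∀ k, ∀ w ∈ cutSet r (n k) (ρ k),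
      ρ k * rmin ≤ (w.map r).prod ∧ (w.map r).prod ≤ ρ k := fun k w hw =>
    ⟨le_prod_of_mem_cutSet hrmin hrmin_le
      (by nlinarith [(hρ k).1, (hρ k).2, hrmin_le i, hle_rmax i]) w hw,
      prod_le_of_mem_cutSet hr hle_rmax (hn k).le w hw⟩
  set Λ := fun k => cutSetMeeting S r K (n k) (c k) (ρ k)
  calc ∑ k ∈ F, (μ (ball (c k) (ρ k))).toReal ^ q * (2 * ρ k) ^ t
      ≤ ∑ k ∈ F, M ^ q * K₂ * ∑ w ∈ Λ k, (w.map fun i => p i ^ q * r i ^ t).prod :=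
        Finset.sum_le_sum fun k _ => toReal_measure_ball_rpow_mul_le hr hp hS hμ
          ((prob_compl_eq_zero_iff hK.measurableSet).2 hμK) hKcov hU hdisj ha haU hD.le hKD
          hrmin (hc k) (hρ k).1 (hscale k) hq
    _ = M ^ q * K₂ * ∑ k ∈ F, ∑ w ∈ Λ k, (w.map fun i => p i ^ q * r i ^ t).prod := by
        rw [Finset.mul_sum]
    _ ≤ _ := by
        refine mul_le_mul_of_nonneg_left ?_ (mul_nonneg (Real.rpow_nonneg (by positivity) q)
          ((Real.rpow_nonneg zero_le_two t).trans (le_max_right _ _)))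
        refine (Finset.sum_sum_le_mul_sum_biUnion F Λ (List.prod_map_nonneg hweight)
          (card_filter_mem_cutSetMeeting_le hS hr hD.le hKD hrmin hscale hdisjB F)).trans ?_
        gcongr
        exact List.sum_prod_map_le hweight ht _

end Euclidean

end Moment

section Dimension

section Metric

variable [MetricSpace X] [MeasurableSpace X] {μ : Measure X} {K : Set X}

theorem setOf_limsup_le_subset_iUnion {T α ε : ℝ} (hε : 0 < ε)
    (hT : ∀ x ∈ K, ∀ᶠ ρ in 𝓝[>] 0, ρ ^ T ≤ (μ (ball x ρ)).toReal) :
    {x ∈ K | limsup (fun ρ => Real.log (μ (ball x ρ)).toReal / Real.log ρ) (𝓝[>] 0) ≤ α}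
      ⊆ ⋃ m : ℕ, {x ∈ K | ∀ ρ ∈ Set.Ioo 0 (1 / ((m : ℝ) + 1)),
          ρ ^ (α + ε) ≤ (μ (ball x ρ)).toReal} := by
  rintro x ⟨hxK, hx⟩
  obtain ⟨u, hu, hsub⟩ := mem_nhdsGT_iff_exists_Ioo_subset.1
    (eventually_rpow_le_of_limsup_le hε (hT x hxK) hx)
  obtain ⟨m, hm⟩ := exists_nat_one_div_lt (Set.mem_Ioi.1 hu)
  exact Set.mem_iUnion.2 ⟨m, hxK, fun ρ hρ => hsub ⟨hρ.1, hρ.2.trans hm⟩⟩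

theorem prePackingMeasure_eq_zero_of_sum_rpow_le {a q t ε δ₀ C : ℝ} (hε : 0 < ε) (hq : 0 ≤ q)
    (hδ₀ : δ₀ ∈ Set.Ioc 0 1)
    (hC : ∀ (c : ℕ → X) (ρ : ℕ → ℝ), (∀ k, c k ∈ K) → (∀ k, ρ k ∈ Set.Ioo 0 1) →
      (Pairwise fun k l => Disjoint (closedBall (c k) (ρ k)) (closedBall (c l) (ρ l))) →
      ∀ F : Finset ℕ, ∑ k ∈ F, (μ (ball (c k) (ρ k))).toReal ^ q * (2 * ρ k) ^ t ≤ C) :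
    prePackingMeasure (a * q + t + ε)
      {x ∈ K | ∀ ρ ∈ Set.Ioo 0 δ₀, ρ ^ a ≤ (μ (ball x ρ)).toReal} = 0 := by
  refine prePackingMeasure_eq_zero_of_sum_le (C := 2 ^ (a * q) * C) hε hδ₀.1
    fun δ hδ c ρ hc hρ hdisj k => ?_
  have hρδ : ∀ n, ρ n < δ₀ := fun n => by linarith [hρ n, hδ.2]
  calc ∑ n ∈ Finset.range k, (2 * ρ n) ^ (a * q + t + ε)
      ≤ ∑ n ∈ Finset.range k, 2 ^ (a * q) * δ ^ ε *
          ((μ (ball (c n) (ρ n))).toReal ^ q * (2 * ρ n) ^ t) :=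
        Finset.sum_le_sum fun n _ => rpow_add_add_le_of_rpow_le (hρ n).1 (hρ n).2 hq hε.le
          ((hc n).2 (ρ n) ⟨(hρ n).1, hρδ n⟩)
    _ = 2 ^ (a * q) * δ ^ ε *
          ∑ n ∈ Finset.range k, (μ (ball (c n) (ρ n))).toReal ^ q * (2 * ρ n) ^ t := by
        rw [Finset.mul_sum]
    _ ≤ 2 ^ (a * q) * δ ^ ε * C :=
        mul_le_mul_of_nonneg_left (hC c ρ (fun n => (hc n).1)
          (fun n => ⟨(hρ n).1, (hρδ n).trans_le hδ₀.2⟩) hdisj _) (by have := hδ.1; positivity)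
    _ = 2 ^ (a * q) * C * δ ^ ε := by ring

end Metric

variable [Fintype ι] [DecidableEq ι] [Nonempty ι] {E : Type*} [NormedAddCommGroup E]
  [NormedSpace ℝ E] [FiniteDimensional ℝ E] [StrictConvexSpace ℝ E] [MeasurableSpace E]
  [BorelSpace E] {S : ι → E → E} {r p : ι → ℝ} {K U : Set E} {μ : Measure E}
  [IsProbabilityMeasure μ] {β : ℝ → ℝ}

theorem packingMeasure_levelSet_eq_zero {rmin rmax : ℝ} (hrmin : 0 < rmin)
    (hrmin_le : ∀ i, rmin ≤ r i) (hrmax : rmax < 1) (hle_rmax : ∀ i, r i ≤ rmax)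
    (hp : ∀ i, 0 < p i) (hS : ∀ i x y, dist (S i x) (S i y) = r i * dist x y)
    (hμ : μ = ∑ i, ENNReal.ofReal (p i) • μ.map (S i)) (hμK : μ K = 1) (hK : IsCompact K)
    (hKcov : K ⊆ ⋃ i, S i '' K) (hUo : IsOpen U) (hUne : U.Nonempty) (hU : ∀ i, S i '' U ⊆ U)
    (hdisj : Pairwise fun i j => Disjoint (S i '' U) (S j '' U))
    (hβ : ∀ q, ∑ i, p i ^ q * r i ^ β q = 1) {α q s : ℝ} (hq : 0 ≤ q) (hs : α * q + β q < s) :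
    packingMeasure s {x ∈ K |
      Filter.limsup (fun ρ => Real.log (μ (ball x ρ)).toReal / Real.log ρ) (𝓝[>] 0) ≤ α} = 0 := by
  have hr0 : ∀ i, 0 < r i := fun i => hrmin.trans_le (hrmin_le i)
  have hr1 : ∀ i, r i < 1 := fun i => (hle_rmax i).trans_lt hrmax
  set ε := (s - (α * q + β q)) / (q + 2)
  have hε : 0 < ε := div_pos (sub_pos.2 hs) (by linarith)
  have hs_eq : s = (α + ε) * q + (β q + ε) + ε := by
    simp only [ε]
    field_simp
    ring
  have ht : ∑ i, p i ^ q * r i ^ (β q + ε) < 1 :=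
    hβ q ▸ sum_rpow_strictAnti hp hr0 hr1 q (lt_add_of_pos_right _ hε)
  obtain ⟨C, hC⟩ := exists_sum_rpow_measure_ball_mul_le hrmin hrmin_le hrmax hle_rmax
    (fun i => (hp i).le) hS hμ hμK hK hKcov hUo hUne hU hdisj hq ht
  obtain ⟨T, hT⟩ := exists_rpow_le_measure_ball hrmin hrmin_le hrmax hle_rmax hp hS hμ hμK hK hKcov
  refine packingMeasure_eq_zero_of_subset_iUnion (setOf_limsup_le_subset_iUnion hε hT) fun m => ?_
  rw [hs_eq]
  exact prePackingMeasure_eq_zero_of_sum_rpow_le hε hq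
    ⟨Nat.one_div_pos_of_nat, div_le_one_of_le₀ (by simp) (by positivity)⟩ hC

end Dimension

end IFS

open IFS in
theorem dimP_upper_level_set_le_general (N d : ℕ) (hN : 1 ≤ N)
    (S : Fin N → EuclideanSpace ℝ (Fin d) → EuclideanSpace ℝ (Fin d))
    (r p : Fin N → ℝ) (hr : ∀ i, r i ∈ Set.Ioo (0:ℝ) 1)
    (hS : ∀ i x y, dist (S i x) (S i y) = r i * dist x y)
    (hp : ∀ i, 0 < p i)
    (K : Set (EuclideanSpace ℝ (Fin d))) (hKne : K.Nonempty) (hKc : IsCompact K)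
    (hK : K = ⋃ i, S i '' K)
    (μ : Measure (EuclideanSpace ℝ (Fin d))) [IsProbabilityMeasure μ]
    (hμ : μ = ∑ i, ENNReal.ofReal (p i) • μ.map (S i))
    -- open set condition
    (U : Set (EuclideanSpace ℝ (Fin d))) (hUo : IsOpen U) (hUne : U.Nonempty)
    (hUsub : ∀ i, S i '' U ⊆ U)
    (hUdisj : Pairwise fun i j : Fin N => Disjoint (S i '' U) (S j '' U))
    (β : ℝ → ℝ) (hβ : ∀ q, ∑ i, p i ^ q * r i ^ β q = 1)
    (β'0 : ℝ) (hβ' : HasDerivAt β β'0 0)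
    (α : ℝ) (hα : α ≤ -β'0) :
    dimP {x ∈ K |
        Filter.limsup (fun ρ => Real.log (μ (ball x ρ)).toReal / Real.log ρ)
          (𝓝[>] (0:ℝ)) ≤ α} ≤
      sInf (Set.range fun q : ℝ => α * q + β q) := by
  have hr0 : ∀ i, 0 < r i := fun i => (hr i).1
  have hr1 : ∀ i, r i < 1 := fun i => (hr i).2
  have : Nonempty (Fin N) := ⟨⟨0, hN⟩⟩
  obtain ⟨imin, himin⟩ := Finite.exists_min r
  obtain ⟨imax, himax⟩ := Finite.exists_max r
  have hμK : μ K = 1 := measure_eq_one_of_contracting (hr0 imax).le (hr1 imax) himax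
    (fun i x y => (hS i x y).le) (fun i => (continuous_of_dist_eq_mul (hr0 i).le (hS i)).measurable)
    hμ hKc hKne fun i => (Set.subset_iUnion (fun j => S j '' K) i).trans hK.ge
  refine le_sInf_range_of_forall_le_max (fun q hq => dimP_le_of_forall_packingMeasure_eq_zero
    fun s hs => packingMeasure_levelSet_eq_zero (hr0 imin) himin (hr1 imax) himax hp hS hμ hμK hKc
      hK.le hUo hUne hUsub hUdisj hβ hq hs) (fun q hq => ?_) ?_
  · have htangent := (convexOn_of_sum_rpow_eq_one hp hr0 hr1 hβ).add_mul_sub_le_of_hasDerivAt hβ' hq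
    nlinarith [mul_nonneg_of_nonpos_of_nonpos (by linarith : α + β'0 ≤ 0) hq.le]
  by_cases hαa : ∃ i, Real.logb (r i) (p i) ≤ α
  · obtain ⟨i, hi⟩ := hαa
    exact Or.inl fun q hq => by nlinarith [logb_mul_add_nonneg hp hr0 hr1 hβ i q]
  · exact Or.inr (exists_nonneg_mul_add_lt hp hr0 hr1 hβ fun i => not_le.1 fun h => hαa ⟨i, h⟩)

theorem dimP_upper_level_set_le (N d : ℕ) (hN : 1 ≤ N)
    (S : Fin N → EuclideanSpace ℝ (Fin d) → EuclideanSpace ℝ (Fin d))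
    (r p : Fin N → ℝ) (hr : ∀ i, r i ∈ Set.Ioo (0:ℝ) 1)
    (hS : ∀ i x y, dist (S i x) (S i y) = r i * dist x y)
    (hp : ∀ i, 0 < p i) (hpsum : ∑ i, p i = 1)
    (K : Set (EuclideanSpace ℝ (Fin d))) (hKne : K.Nonempty) (hKc : IsCompact K)
    (hK : K = ⋃ i, S i '' K)
    (μ : Measure (EuclideanSpace ℝ (Fin d))) [IsProbabilityMeasure μ]
    (hμ : μ = ∑ i, ENNReal.ofReal (p i) • μ.map (S i))
    -- open set condition
    (U : Set (EuclideanSpace ℝ (Fin d))) (hUo : IsOpen U) (hUne : U.Nonempty)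
    (hUb : Bornology.IsBounded U) (hUsub : ∀ i, S i '' U ⊆ U)
    (hUdisj : Pairwise fun i j : Fin N => Disjoint (S i '' U) (S j '' U))
    (β : ℝ → ℝ) (hβ : ∀ q, ∑ i, p i ^ q * r i ^ β q = 1)
    (β'0 : ℝ) (hβ' : HasDerivAt β β'0 0)
    (α : ℝ) (hα : α ≤ -β'0) :
    dimP {x ∈ K |
        Filter.limsup (fun ρ => Real.log (μ (ball x ρ)).toReal / Real.log ρ)
          (𝓝[>] (0:ℝ)) ≤ α} ≤
      sInf (Set.range fun q : ℝ => α * q + β q) :=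
  dimP_upper_level_set_le_general N d hN S r p hr hS hp K hKne hKc hK μ hμ U hUo hUne hUsub hUdisj β
    hβ β'0 hβ' α hα
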